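/- arXiv:1603.07261 — 4 statements merged into one kernel-verified Lean document; each statement's English description precedes it below -/
import Mathlib

section
/- Let 0 < c < 1 and β > 0, and let Δ be the forward difference operator Δf(x) = f(x+1) − f(x). For any polynomial f, [(1 − (c/(1−c))·Δ)^{−β} f](0), defined as the finite sum Σₖ ((β)ₖ/k!)·(c/(1−c))ᵏ·Δᵏf(0), equals (1−c)^β · Σ_{j=0}^∞ ((β)ⱼ·cʲ/j!)·f(j), where the right-hand side series converges absolutely. -/
/-!
By Newton's formula `f j = ∑ₖ C(j, k) Δᵏf(0)` it suffices to treat the weights `j ↦ C(j, k)`.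
For these, the substitution `j = k + m` and `(β)ₖ₊ₘ = (β)ₖ (β + k)ₘ` turn the series into
`(β)ₖ cᵏ / k!` times the binomial series `∑ₘ (β + k)ₘ cᵐ / m! = (1 - c) ^ (-(β + k))`.
A summable real series is absolutely summable, so absolute convergence comes for free.
-/

open Finset Polynomial
open scoped Nat

theorem Polynomial.eval_natCast_eq_sum_fwdDiff_iter {R : Type*} [CommRing R] (P : R[X]) (j : ℕ) :
    P.eval (j : R) = ∑ k ∈ range (P.natDegree + 1),
      (j.choose k : R) * (fwdDiff (1 : R))^[k] (fun x => P.eval x) 0 := by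
  have newton := shift_eq_sum_fwdDiff_iter (1 : R) (fun x => P.eval x) j 0
  rw [zero_add, nsmul_one] at newton
  rw [newton]
  set D : ℕ → R := fun k => (fwdDiff (1 : R))^[k] (fun x => P.eval x) 0
  have hD : ∀ k, P.natDegree < k → D k = 0 := fun k hk => by
    simp only [D, fwdDiff_iter_eq_zero_of_degree_lt hk, Pi.zero_apply]
  calc ∑ k ∈ range (j + 1), j.choose k • D k
      = ∑ k ∈ range (j + P.natDegree + 1), (j.choose k : R) * D k := by
        simp_rw [nsmul_eq_mul]
        exact sum_subset (range_subset_range.2 (by omega)) fun k _ hk => by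
          rw [Nat.choose_eq_zero_of_lt (by simpa using hk), Nat.cast_zero, zero_mul]
    _ = ∑ k ∈ range (P.natDegree + 1), (j.choose k : R) * D k :=
        (sum_subset (range_subset_range.2 (by omega)) fun k _ hk => by
          rw [hD k (by simpa using hk), mul_zero]).symm

theorem ascPochhammer_eval_add {S : Type*} [CommSemiring S] (a : S) (k m : ℕ) :
    (ascPochhammer S (k + m)).eval a =
      (ascPochhammer S k).eval a * (ascPochhammer S m).eval (a + k) := by
  rw [← ascPochhammer_mul, eval_mul, eval_comp, eval_add, eval_X, eval_natCast]

theorem ascPochhammer_eval_div_factorial {K : Type*} [Field K] [CharZero K] (a : K) (n : ℕ) :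
    (ascPochhammer K n).eval a / n ! = Ring.choose (a + n - 1) n := by
  rw [← Ring.multichoose_eq, div_eq_iff (Nat.cast_ne_zero.2 n.factorial_ne_zero), mul_comm,
    ← nsmul_eq_mul, Ring.factorial_nsmul_multichoose_eq_ascPochhammer, ascPochhammer_smeval_cast,
    ascPochhammer_smeval_eq_eval]

theorem hasSum_ascPochhammer_mul_pow_div_factorial (a x : ℝ) (hx : |x| < 1) :
    HasSum (fun n : ℕ => (ascPochhammer ℝ n).eval a * x ^ n / n !) ((1 - x) ^ (-a)) := by
  have hx_mem : x ∈ Metric.eball (0 : ℝ) 1 := by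
    rw [Metric.mem_eball, edist_zero_right, enorm_eq_nnnorm]
    exact_mod_cast (show ‖x‖₊ < 1 from hx)
  have binomial := (Real.one_div_one_sub_rpow_hasFPowerSeriesOnBall_zero a).hasSum hx_mem
  simp only [FormalMultilinearSeries.ofScalars_apply_eq, zero_add] at binomial
  rw [Real.rpow_neg (by linarith [le_abs_self x]), ← one_div]
  exact binomial.congr_fun fun n => by
    rw [← ascPochhammer_eval_div_factorial, smul_eq_mul]
    ring

theorem hasSum_ascPochhammer_mul_pow_div_factorial_mul_choose (a x : ℝ) (hx : |x| < 1) (k : ℕ) :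
    HasSum (fun j : ℕ => (ascPochhammer ℝ j).eval a * x ^ j / j ! * j.choose k)
      ((ascPochhammer ℝ k).eval a * x ^ k / k ! * (1 - x) ^ (-(a + k))) := by
  rw [← (add_left_injective k).hasSum_iff fun j hj => ?_]
  · refine ((hasSum_ascPochhammer_mul_pow_div_factorial (a + k) x hx).mul_left
      ((ascPochhammer ℝ k).eval a * x ^ k / k !)).congr_fun fun m => ?_
    rw [Function.comp_apply, add_comm m k, ascPochhammer_eval_add, Nat.cast_add_choose]
    field_simp
    ring
  · have hjk : j < k := by
      by_contra! h
      exact hj ⟨j - k, Nat.sub_add_cancel h⟩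
    rw [Nat.choose_eq_zero_of_lt hjk, Nat.cast_zero, mul_zero]

theorem hasSum_ascPochhammer_mul_pow_div_factorial_mul_eval (a x : ℝ) (hx : |x| < 1) (f : ℝ[X]) :
    HasSum (fun j : ℕ => (ascPochhammer ℝ j).eval a * x ^ j / j ! * f.eval (j : ℝ))
      ((1 - x) ^ (-a) * ∑ k ∈ range (f.natDegree + 1),
        (ascPochhammer ℝ k).eval a / k ! * (x / (1 - x)) ^ k
          * (fwdDiff (1 : ℝ))^[k] (fun y => f.eval y) 0) := by
  have hx1 : 0 < 1 - x := by linarith [le_abs_self x]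
  have hcoeff : ∀ k : ℕ,
      (1 - x) ^ (-a) * ((ascPochhammer ℝ k).eval a / k ! * (x / (1 - x)) ^ k) =
        (ascPochhammer ℝ k).eval a * x ^ k / k ! * (1 - x) ^ (-(a + k)) := fun k => by
    rw [neg_add, Real.rpow_add hx1, Real.rpow_neg hx1.le (k : ℝ), Real.rpow_natCast, div_pow]
    field_simp
  simp_rw [f.eval_natCast_eq_sum_fwdDiff_iter, mul_sum]
  refine hasSum_sum fun k _ => ?_
  rw [← mul_assoc ((1 - x) ^ (-a)), hcoeff]
  exact ((hasSum_ascPochhammer_mul_pow_div_factorial_mul_choose a x hx k).mul_right _).congr_fun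
    fun j => (mul_assoc _ _ _).symm

open Polynomial in
theorem meixner_functional_newton_series_general
    (c β : ℝ) (hc0 : 0 < c) (hc1 : c < 1) (f : Polynomial ℝ) :
    (∑ k ∈ Finset.range (f.natDegree + 1),
        (ascPochhammer ℝ k).eval β / (Nat.factorial k) * (c / (1-c))^k
          * (fwdDiff (1:ℝ))^[k] (fun x => f.eval x) 0)
      = (1-c) ^ β *
          ∑' j : ℕ, (ascPochhammer ℝ j).eval β * c^j / (Nat.factorial j)
            * f.eval (j:ℝ) ∧
    Summable (fun j : ℕ =>
      |(ascPochhammer ℝ j).eval β * c^j / (Nat.factorial j) * f.eval (j:ℝ)|) := by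
  have h := hasSum_ascPochhammer_mul_pow_div_factorial_mul_eval β c
    (abs_lt.2 ⟨by linarith, hc1⟩) f
  refine ⟨?_, summable_abs_iff.2 h.summable⟩
  rw [h.tsum_eq, ← mul_assoc, ← Real.rpow_add (by linarith), add_neg_cancel, Real.rpow_zero,
    one_mul]

open Polynomial in
/-- for `0 < c < 1`, `β > 0` and a polynomial `f`,
`Σₖ (β)ₖ/k! (c/(1−c))ᵏ Δᵏf(0) = (1−c)^β Σⱼ (β)ⱼ cʲ/j! f(j)`,
the right-hand series converging absolutely. -/
theorem meixner_functional_newton_series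
    (c β : ℝ) (hc0 : 0 < c) (hc1 : c < 1) (hβ : 0 < β) (f : Polynomial ℝ) :
    (∑ k ∈ Finset.range (f.natDegree + 1),
        (ascPochhammer ℝ k).eval β / (Nat.factorial k) * (c / (1-c))^k
          * (fwdDiff (1:ℝ))^[k] (fun x => f.eval x) 0)
      = (1-c) ^ β *
          ∑' j : ℕ, (ascPochhammer ℝ j).eval β * c^j / (Nat.factorial j)
            * f.eval (j:ℝ) ∧
    Summable (fun j : ℕ =>
      |(ascPochhammer ℝ j).eval β * c^j / (Nat.factorial j) * f.eval (j:ℝ)|) :=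
  meixner_functional_newton_series_general c β hc0 hc1 f
end

section
/- Let H(t) = ((c−1)/(2c))·[(t²−2t)/(1−t)²] with c ∉ {0,1}. Then as formal power series, 1 + H(t)·(2c/(c−1)) reproduces (t²−2t)/(1−t)², and the series G(x,t) = (1−t)^{−β}(1 + ((c−1)/(2c))·(t²−2t)/(1−t)²)^x satisfies σ(t)·∂G/∂t − γ(t)·G = x·G, where σ(t) = −(c/(c−1))(1−t)[(1−t)² + ((c−1)/(2c))((1−t)²−1)] and γ(t) = −(βc/(c−1))[(1−t)² + ((c−1)/(2c))((1−t)²−1)]. -/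
/-! Put `s = 1 - t` and `P = 1 + a (t² - 2t)/s²`. Since `(t² - 2t)/s² = 1 - s⁻²`, the bracket in
`σ` and `γ` is `s² + a (s² - 1) = s² P`, and the logarithmic derivative of
`G = s^(-β) P^x` is `β/s - 2 a x/(s³ P)`. Hence `s · s² P · G' = (β s² P - 2 a x) G`, and with
`a = (c-1)/(2c)` the `β`-terms of `σ G' - γ G` cancel, leaving `(c/(c-1)) · 2 a x G = x G`. -/

namespace Meixner

noncomputable def genFun (a β x t : ℝ) : ℝ :=
  (1 - t) ^ (-β) * (1 + a * ((t ^ 2 - 2 * t) / (1 - t) ^ 2)) ^ x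

variable {a β x t : ℝ}

lemma hasDerivAt_sq_sub_two_mul_div_one_sub_sq (ht : t ≠ 1) :
    HasDerivAt (fun u : ℝ => (u ^ 2 - 2 * u) / (1 - u) ^ 2) (-2 / (1 - t) ^ 3) t := by
  have hs : 1 - t ≠ 0 := sub_ne_zero.mpr ht.symm
  have hnum : HasDerivAt (fun u : ℝ => u ^ 2 - 2 * u) (2 * t - 2) t := by
    refine ((hasDerivAt_pow 2 t).sub ((hasDerivAt_id' t).const_mul 2)).congr_deriv ?_
    ring
  have hden : HasDerivAt (fun u : ℝ => (1 - u) ^ 2) (-2 * (1 - t)) t := by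
    refine (((hasDerivAt_id' t).const_sub 1).pow 2).congr_deriv ?_
    ring
  refine (hnum.div hden (pow_ne_zero 2 hs)).congr_deriv ?_
  field_simp
  ring

lemma one_sub_sq_add_mul_eq (a : ℝ) (ht : t ≠ 1) :
    (1 - t) ^ 2 + a * ((1 - t) ^ 2 - 1) = (1 + a * ((t ^ 2 - 2 * t) / (1 - t) ^ 2)) * (1 - t) ^ 2 := by
  have hs : 1 - t ≠ 0 := sub_ne_zero.mpr ht.symm
  field_simp
  ring

theorem one_sub_mul_mul_deriv_genFun (ht : t ≠ 1)
    (hP : 1 + a * ((t ^ 2 - 2 * t) / (1 - t) ^ 2) ≠ 0) :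
    (1 - t) * ((1 - t) ^ 2 + a * ((1 - t) ^ 2 - 1)) * deriv (genFun a β x) t =
      (β * ((1 - t) ^ 2 + a * ((1 - t) ^ 2 - 1)) - 2 * a * x) * genFun a β x t := by
  have hs : 1 - t ≠ 0 := sub_ne_zero.mpr ht.symm
  have hbase := ((hasDerivAt_sq_sub_two_mul_div_one_sub_sq ht).const_mul a).const_add 1
  have hG : HasDerivAt (genFun a β x) _ t :=
    (((hasDerivAt_id' t).const_sub 1).rpow_const (Or.inl hs)).mul (hbase.rpow_const (Or.inl hP))
  rw [hG.deriv, one_sub_sq_add_mul_eq a ht, Real.rpow_sub_one hs,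
    Real.rpow_sub_one hP, genFun]
  -- stops `field_simp` from rewriting inside the base of `^ x`
  generalize 1 + a * ((t ^ 2 - 2 * t) / (1 - t) ^ 2) = P at hP ⊢
  field_simp
  ring

end Meixner

open Meixner in
/-- analytic form: with `H(t) = ((c−1)/(2c))(t²−2t)/(1−t)²`,
`1 + H(t)·(2c/(c−1))` reproduces `(t²−2t)/(1−t)²` (up to the constant 1), and
`G(x,t) = (1−t)^(−β)(1 + ((c−1)/(2c))(t²−2t)/(1−t)²)^x` satisfies
`σ(t) ∂G/∂t − γ(t) G = x G` with
`σ(t) = −(c/(c−1))(1−t)[(1−t)² + ((c−1)/(2c))((1−t)²−1)]` and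
`γ(t) = −(βc/(c−1))[(1−t)² + ((c−1)/(2c))((1−t)²−1)]`. -/
theorem meixner_type_functional_equation
    (c β x t : ℝ) (hc0 : c ≠ 0) (hc1 : c ≠ 1) (ht : |t| < 1)
    (ht2 : 0 < 1 + ((c-1)/(2*c)) * ((t^2 - 2*t)/(1-t)^2)) :
    ((c-1)/(2*c)) * ((t^2 - 2*t)/(1-t)^2) * (2*c/(c-1)) = (t^2 - 2*t)/(1-t)^2 ∧
    (-(c/(c-1)) * (1-t) * ((1-t)^2 + ((c-1)/(2*c)) * ((1-t)^2 - 1))) *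
        deriv (fun u : ℝ =>
          (1-u) ^ (-β) * (1 + ((c-1)/(2*c)) * ((u^2 - 2*u)/(1-u)^2)) ^ x) t
      - (-(β*c/(c-1)) * ((1-t)^2 + ((c-1)/(2*c)) * ((1-t)^2 - 1))) *
          ((1-t) ^ (-β) * (1 + ((c-1)/(2*c)) * ((t^2 - 2*t)/(1-t)^2)) ^ x)
      = x * ((1-t) ^ (-β) * (1 + ((c-1)/(2*c)) * ((t^2 - 2*t)/(1-t)^2)) ^ x) := by
  have hc1' : c - 1 ≠ 0 := sub_ne_zero.mpr hc1
  have ht1 : t ≠ 1 := by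
    rintro rfl
    norm_num at ht
  refine ⟨by field_simp, ?_⟩
  have hode := one_sub_mul_mul_deriv_genFun (β := β) (x := x) ht1 ht2.ne'
  unfold genFun at hode
  linear_combination (norm := skip) (-(c / (c - 1))) * hode
  field_simp
  ring
end

section
/- Let f be a polynomial and α > −1. Define Ψ_{α,f}(x) = (x^α/Γ(α+1))·Σ_{k} (f^{(k)}(0)/(k!·((α+2)/2)ₖ))·(x²/2)ᵏ (a finite sum). Then ∫₀^∞ Ψ_{α,f}(x)·e^{−x} dx = Σₖ (((α+1)/2)ₖ·2ᵏ/k!)·f^{(k)}(0). -/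
/-!
Integrating termwise, the `k`-th term is a Gamma integral: `∫₀^∞ x^(α+2k) e^(-x) dx =
Γ(α+2k+1) = Γ(α+1) (α+1)_{2k}`. The duplication formula
`(a)_{2k} = 4^k (a/2)_k ((a+1)/2)_k` at `a = α+1` turns this into
`Γ(α+1) 4^k ((α+1)/2)_k ((α+2)/2)_k`, whose last factor cancels the one in the denominator.
-/

open Polynomial MeasureTheory Set Real

theorem ascPochhammer_eval_two_mul {K : Type*} [Field K] [NeZero (2 : K)] (k : ℕ) (x : K) :
    (ascPochhammer K (2 * k)).eval x
      = 4 ^ k * (ascPochhammer K k).eval (x / 2) * (ascPochhammer K k).eval ((x + 1) / 2) := by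
  induction k with
  | zero => simp
  | succ k ih =>
    rw [show 2 * (k + 1) = 2 * k + 1 + 1 by ring, ascPochhammer_succ_eval, ascPochhammer_succ_eval,
      ih, ascPochhammer_succ_eval, ascPochhammer_succ_eval]
    field_simp
    push_cast
    ring

theorem Real.Gamma_add_nat {s : ℝ} (hs : ∀ m : ℕ, s ≠ -m) (n : ℕ) :
    Gamma (s + n) = (ascPochhammer ℝ n).eval s * Gamma s := by
  induction n with
  | zero => simp
  | succ n ih =>
    have hsn : s + n ≠ 0 := fun h => hs n (eq_neg_of_add_eq_zero_left h)
    rw [Nat.cast_succ, ← add_assoc, Gamma_add_one hsn, ih, ascPochhammer_succ_eval]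
    ring

theorem rpow_mul_pow_mul_exp_neg_eqOn (s : ℝ) (n : ℕ) :
    EqOn (fun x => x ^ s * x ^ n * exp (-x)) (fun x => exp (-x) * x ^ (s + 1 + n - 1))
      (Ioi 0) := by
  intro x hx
  simp only
  rw [add_sub_right_comm, add_sub_cancel_right, rpow_add_natCast (ne_of_gt hx)]
  ring

theorem integrableOn_rpow_mul_pow_mul_exp_neg {s : ℝ} (hs : -1 < s) (n : ℕ) :
    IntegrableOn (fun x => x ^ s * x ^ n * exp (-x)) (Ioi 0) :=
  (GammaIntegral_convergent (by linarith [n.cast_nonneg (α := ℝ)] : 0 < s + 1 + n)).congr_fun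
    (rpow_mul_pow_mul_exp_neg_eqOn s n).symm measurableSet_Ioi

theorem integral_rpow_mul_pow_mul_exp_neg {s : ℝ} (hs : -1 < s) (n : ℕ) :
    ∫ x in Ioi 0, x ^ s * x ^ n * exp (-x) = Gamma (s + 1) * (ascPochhammer ℝ n).eval (s + 1) := by
  rw [setIntegral_congr_fun measurableSet_Ioi (rpow_mul_pow_mul_exp_neg_eqOn s n),
    ← Gamma_eq_integral (by linarith [n.cast_nonneg (α := ℝ)]), Gamma_add_nat (fun m h => ?_),
    mul_comm]
  linarith [m.cast_nonneg (α := ℝ)]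

theorem rpow_div_Gamma_mul_sq_div_two_pow_mul_exp_neg_eq (α : ℝ) (k : ℕ) (x : ℝ) :
    x ^ α / Gamma (α + 1) * (x ^ 2 / 2) ^ k * exp (-x)
      = (Gamma (α + 1) * 2 ^ k)⁻¹ * (x ^ α * x ^ (2 * k) * exp (-x)) := by
  rw [div_pow, ← pow_mul]
  ring

theorem integrableOn_rpow_div_Gamma_mul_sq_div_two_pow_mul_exp_neg {α : ℝ} (hα : -1 < α)
    (k : ℕ) :
    IntegrableOn (fun x => x ^ α / Gamma (α + 1) * (x ^ 2 / 2) ^ k * exp (-x)) (Ioi 0) := by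
  simp_rw [rpow_div_Gamma_mul_sq_div_two_pow_mul_exp_neg_eq]
  exact (integrableOn_rpow_mul_pow_mul_exp_neg hα _).const_mul _

theorem integral_rpow_div_Gamma_mul_sq_div_two_pow_mul_exp_neg {α : ℝ} (hα : -1 < α) (k : ℕ) :
    ∫ x in Ioi 0, x ^ α / Gamma (α + 1) * (x ^ 2 / 2) ^ k * exp (-x)
      = 2 ^ k * (ascPochhammer ℝ k).eval ((α + 1) / 2)
          * (ascPochhammer ℝ k).eval ((α + 2) / 2) := by
  have hΓ : Gamma (α + 1) ≠ 0 := (Gamma_pos_of_pos (by linarith)).ne'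
  simp_rw [rpow_div_Gamma_mul_sq_div_two_pow_mul_exp_neg_eq]
  rw [integral_const_mul, integral_rpow_mul_pow_mul_exp_neg hα, ascPochhammer_eval_two_mul,
    show (α + 1 + 1) / 2 = (α + 2) / 2 by ring,
    show (4 : ℝ) ^ k = 2 ^ k * 2 ^ k by rw [← mul_pow]; norm_num]
  field_simp

open Polynomial in
/-- for a polynomial `f` and `α > −1`, with
`Ψ_{α,f}(x) = (x^α/Γ(α+1)) Σₖ f⁽ᵏ⁾(0)/(k!((α+2)/2)ₖ) (x²/2)ᵏ`,
one has `∫₀^∞ Ψ_{α,f}(x) e^{−x} dx = Σₖ ((α+1)/2)ₖ 2ᵏ/k! f⁽ᵏ⁾(0)`. -/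
theorem two_orthogonal_laguerre_functional (f : Polynomial ℝ) (α : ℝ) (hα : -1 < α) :
    ∫ x in Set.Ioi (0:ℝ),
        (x ^ α / Real.Gamma (α+1)
          * ∑ k ∈ Finset.range (f.natDegree + 1),
              (derivative^[k] f).eval 0
                / ((Nat.factorial k) * (ascPochhammer ℝ k).eval ((α+2)/2))
                * (x^2/2)^k) * Real.exp (-x)
      = ∑ k ∈ Finset.range (f.natDegree + 1),
          (ascPochhammer ℝ k).eval ((α+1)/2) * 2^k / (Nat.factorial k)
            * (derivative^[k] f).eval 0 := by
  calc _ = ∫ x in Ioi 0, ∑ k ∈ Finset.range (f.natDegree + 1),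
          (derivative^[k] f).eval 0 / (k.factorial * (ascPochhammer ℝ k).eval ((α + 2) / 2))
            * (x ^ α / Gamma (α + 1) * (x ^ 2 / 2) ^ k * exp (-x)) := by
        congr 1 with x
        rw [Finset.mul_sum, Finset.sum_mul]
        exact Finset.sum_congr rfl fun k _ => by ring
    _ = _ := by
        rw [integral_finsetSum _ fun k _ =>
          (integrableOn_rpow_div_Gamma_mul_sq_div_two_pow_mul_exp_neg hα k).const_mul _]
        refine Finset.sum_congr rfl fun k _ => ?_
        have hP : (ascPochhammer ℝ k).eval ((α + 2) / 2) ≠ 0 :=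
          (ascPochhammer_pos k _ (by linarith)).ne'
        rw [integral_const_mul, integral_rpow_div_Gamma_mul_sq_div_two_pow_mul_exp_neg hα]
        field_simp
end

section
/- In formal power series, for any α: [d/dt]((1−t)^{−(α+1)}·exp(x·(t²−2t)/(2(1−t)²))) = [(α+1)/(1−t) + x·(−1)/(1−t)³]·(1−t)^{−(α+1)}·exp(x·(t²−2t)/(2(1−t)²)); equivalently, G(x,t) = (1−t)^{−α−1}exp(x(t²−2t)/(2(1−t)²)) satisfies −(1−t)³·∂G/∂t + (α+1)(1−t)²·G = x·G. -/
/-!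
`G` is the product of `(1-t)^(-(α+1))`, whose logarithmic derivative is `(α+1)/(1-t)`, and of
`exp (x q t)` with `q t = (t² - 2t)/(2(1-t)²)`. Since `t² - 2t = (1-t)² - 1`, `q t = 1/2 - 1/(2(1-t)²)`,
so `q' t = -1/(1-t)³`. Hence `G' = ((α+1)/(1-t) - x/(1-t)³) G`, and multiplying by `-(1-t)³`
gives the second form.
-/

noncomputable def laguerreGF (α x u : ℝ) : ℝ :=
  (1 - u) ^ (-(α + 1)) * Real.exp (x * (u ^ 2 - 2 * u) / (2 * (1 - u) ^ 2))

lemma hasDerivAt_one_sub_rpow (a : ℝ) {t : ℝ} (ht : t ≠ 1) :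
    HasDerivAt (fun u : ℝ => (1 - u) ^ a) (-a / (1 - t) * (1 - t) ^ a) t := by
  have hne : 1 - t ≠ 0 := sub_ne_zero.mpr ht.symm
  refine (((hasDerivAt_id' t).const_sub 1).rpow_const (p := a) (Or.inl hne)).congr_deriv ?_
  rw [Real.rpow_sub_one hne]
  ring

lemma hasDerivAt_laguerre_exponent (x : ℝ) {t : ℝ} (ht : t ≠ 1) :
    HasDerivAt (fun u : ℝ => x * (u ^ 2 - 2 * u) / (2 * (1 - u) ^ 2)) (x * (-1) / (1 - t) ^ 3) t := by
  have hne : 1 - t ≠ 0 := sub_ne_zero.mpr ht.symm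
  have hnum : HasDerivAt (fun u : ℝ => x * (u ^ 2 - 2 * u)) (x * (2 * t - 2)) t := by
    simpa using (((hasDerivAt_pow 2 t).sub ((hasDerivAt_id t).const_mul 2)).const_mul x)
  have hden : HasDerivAt (fun u : ℝ => 2 * (1 - u) ^ 2) (2 * (2 * (1 - t) * (-1))) t := by
    simpa using (((hasDerivAt_id t).const_sub 1).pow 2).const_mul 2
  refine (hnum.div hden (by positivity)).congr_deriv ?_
  field_simp
  ring

lemma hasDerivAt_laguerreGF (α x : ℝ) {t : ℝ} (ht : t ≠ 1) :
    HasDerivAt (laguerreGF α x) (((α + 1) / (1 - t) + x * (-1) / (1 - t) ^ 3) * laguerreGF α x t) t := by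
  refine ((hasDerivAt_one_sub_rpow (-(α + 1)) ht).mul
    (hasDerivAt_laguerre_exponent x ht).exp).congr_deriv ?_
  unfold laguerreGF
  ring

/-- analytic form: `G(x,t) = (1−t)^(−(α+1)) exp(x(t²−2t)/(2(1−t)²))`
satisfies `∂G/∂t = [(α+1)/(1−t) − x/(1−t)³] G`, equivalently
`−(1−t)³ ∂G/∂t + (α+1)(1−t)² G = x G`. -/
theorem two_orthogonal_laguerre_functional_equation (α x t : ℝ) (ht : t < 1) :
    deriv (fun u : ℝ =>
        (1-u) ^ (-(α+1)) * Real.exp (x * (u^2 - 2*u) / (2*(1-u)^2))) t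
      = ((α+1)/(1-t) + x * (-1)/(1-t)^3) *
          ((1-t) ^ (-(α+1)) * Real.exp (x * (t^2 - 2*t) / (2*(1-t)^2))) ∧
    -(1-t)^3 * deriv (fun u : ℝ =>
        (1-u) ^ (-(α+1)) * Real.exp (x * (u^2 - 2*u) / (2*(1-u)^2))) t
      + (α+1) * (1-t)^2 *
          ((1-t) ^ (-(α+1)) * Real.exp (x * (t^2 - 2*t) / (2*(1-t)^2)))
      = x * ((1-t) ^ (-(α+1)) * Real.exp (x * (t^2 - 2*t) / (2*(1-t)^2))) := by
  have hderiv := (hasDerivAt_laguerreGF α x ht.ne).deriv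
  unfold laguerreGF at hderiv
  refine ⟨hderiv, ?_⟩
  have hne : 1 - t ≠ 0 := sub_ne_zero.mpr ht.ne'
  rw [hderiv]
  field_simp
  ring
end
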